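/- The group presented by ⟨x_1,...,x_p, y, z | x_i^{k_i} = 1, y^b = 1, z^c = 1, x_1⋯x_p y z = z x_1⋯x_p y, and x_i⋯x_p y z x_1⋯x_{i−1} = x_{i+1}⋯x_p y z x_1⋯x_i for all 1 ≤ i ≤ p⟩ is isomorphic to the generalized parent J-group J(k_1,...,k_p, b, c) (with x_i ↦ s_i, y ↦ s_{p+1}, z ↦ s_{p+2}). -/

import Mathlib

/-- The cyclically rotated product `a_i a_{i+1} ⋯ a_{i+p-1}` in the free group on `Fin p`
(indices taken mod `p`). -/
def cycProd (p : ℕ) (i : Fin p) : FreeGroup (Fin p) :=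
  (List.ofFn (fun j : Fin p => FreeGroup.of (i + j))).prod

/-- Relators of the generalized parent J-group `J(K)`:
`⟨s_1,…,s_p ∣ s_1⋯s_p = s_2⋯s_p s_1 = ⋯ = s_p s_1⋯s_{p-1}, s_i^{k_i} = 1 if k_i < ∞⟩`.
Here `k i = 0` encodes `k_i = ∞` (the relator `s_i ^ 0` is vacuous), and the equalities of
all cyclic rotations of the product are encoded by the relators
`(s_i ⋯ s_{i+p-1}) (s_j ⋯ s_{j+p-1})⁻¹`. -/
def JRels (p : ℕ) (k : Fin p → ℕ) : Set (FreeGroup (Fin p)) :=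
  {r | (∃ i, r = FreeGroup.of i ^ k i) ∨ ∃ i j, r = cycProd p i * (cycProd p j)⁻¹}

/-- The generalized parent J-group `J(K)`. -/
abbrev JGroup (p : ℕ) (k : Fin p → ℕ) := PresentedGroup (JRels p k)

/-- The central element `z = s_1 s_2 ⋯ s_p` of `J(K)`. -/
def zElt (p : ℕ) (k : Fin p → ℕ) : JGroup p k :=
  (List.ofFn (fun i : Fin p => (PresentedGroup.of i : JGroup p k))).prod

open Fin.NatCast in
/-- The product `x_a x_{a+1} ⋯ x_{b-1}` of consecutive `x`-generators in the free group on
`Fin (p+2)` (the generators `x_0,…,x_{p-1}, y = p, z = p+1`). -/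
def seg (p a b : ℕ) : FreeGroup (Fin (p + 2)) :=
  ((List.range (b - a)).map (fun t => FreeGroup.of ((a + t : ℕ) : Fin (p + 2)))).prod

open Fin.NatCast in
/-- The generator `y`. -/
def yGen (p : ℕ) : FreeGroup (Fin (p + 2)) := FreeGroup.of ((p : ℕ) : Fin (p + 2))

open Fin.NatCast in
/-- The generator `z`. -/
def zGen (p : ℕ) : FreeGroup (Fin (p + 2)) := FreeGroup.of ((p + 1 : ℕ) : Fin (p + 2))

/-- Relators of the torsion quotient `B**(p,p;K,b,c)` of the J-braid group (with euclidean
division `p = 1·p + 0`): torsion relators `x_i^{k_i}, y^b, z^c` (the exponent function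
`κ : Fin (p+2) → ℕ` collects `k, b, c`; `0` means `∞`), the relator expressing
`x_1⋯x_p y z = z x_1⋯x_p y`, and for each `1 ≤ i ≤ p` the relator expressing
`x_i⋯x_p y z x_1⋯x_{i−1} = x_{i+1}⋯x_p y z x_1⋯x_i` (written here with 0-based indices). -/
def braidRels (p : ℕ) (κ : Fin (p + 2) → ℕ) : Set (FreeGroup (Fin (p + 2))) :=
  {r | (∃ i, r = FreeGroup.of i ^ κ i) ∨
    r = (seg p 0 p * yGen p * zGen p) * (zGen p * seg p 0 p * yGen p)⁻¹ ∨
    ∃ i : Fin p, r = (seg p i p * yGen p * zGen p * seg p 0 i) *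
      (seg p ((i : ℕ) + 1) p * yGen p * zGen p * seg p 0 ((i : ℕ) + 1))⁻¹}

/-- The exponent function on `Fin (p+2)` given by `k` on the first `p` indices, `b` at
index `p` and `c` at index `p+1`. -/
def extFun (p : ℕ) (k : Fin p → ℕ) (b c : ℕ) : Fin (p + 2) → ℕ :=
  fun i => if h : (i : ℕ) < p then k ⟨i, h⟩ else if (i : ℕ) = p then b else c

/-! The braid relators are J-relators: the commutation relator identifies the rotations of
`x_1⋯x_p y z` starting at `x_1` and at `z`, and the `i`-th relator those starting at `x_i` and
`x_{i+1}`. Conversely, these `p + 1` identifications of rotations chain together to identify all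
`p + 2` of them, so the two relator sets have the same normal closure. -/

open Fin.NatCast

section Segments

variable (p : ℕ)

lemma seg_self (a : ℕ) : seg p a a = 1 := by simp [seg]

lemma seg_add_one (a : ℕ) : seg p a (a + 1) = FreeGroup.of (a : Fin (p + 2)) := by
  simp [seg, List.range_succ]

lemma seg_mul_seg {a b c : ℕ} (hab : a ≤ b) (hbc : b ≤ c) :
    seg p a b * seg p b c = seg p a c := by
  unfold seg
  rw [show c - a = (b - a) + (c - b) by omega, List.range_add, List.map_append,
    List.prod_append, List.map_map]
  congr 2
  refine List.map_congr_left fun t _ => ?_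
  simp only [Function.comp_apply, show a + (b - a + t) = b + t by omega]

lemma seg_add_period (a b : ℕ) : seg p (a + (p + 2)) (b + (p + 2)) = seg p a b := by
  unfold seg
  rw [show b + (p + 2) - (a + (p + 2)) = b - a by omega]
  congr 1
  refine List.map_congr_left fun t _ => ?_
  rw [show a + (p + 2) + t = (a + t) + (p + 2) by omega, Nat.cast_add, Fin.natCast_self,
    add_zero]

lemma cycProd_natCast (m : ℕ) : cycProd (p + 2) (m : Fin (p + 2)) = seg p m (m + (p + 2)) := by
  unfold cycProd seg
  rw [show m + (p + 2) - m = p + 2 by omega, List.ofFn_eq_map,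
    ← (show (List.finRange (p + 2)).map Fin.val = List.range (p + 2) from
      List.ext_getElem (by simp) (by simp)), List.map_map]
  congr 1
  refine List.map_congr_left fun j _ => ?_
  simp only [Function.comp_apply, Nat.cast_add, Fin.cast_val_eq_self]

lemma cycProd_natCast_of_le {m : ℕ} (hm : m ≤ p) :
    cycProd (p + 2) (m : Fin (p + 2)) = seg p m p * yGen p * zGen p * seg p 0 m := by
  have hperiod := seg_add_period p 0 m
  rw [zero_add] at hperiod
  rw [cycProd_natCast, ← seg_mul_seg p (a := m) (b := p + 2) (by omega) (by omega),
    ← seg_mul_seg p (a := m) (b := p) (c := p + 2) hm (by omega),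
    ← seg_mul_seg p (a := p) (b := p + 1) (c := p + 2) (by omega) (by omega),
    seg_add_one, seg_add_one, hperiod]
  simp only [mul_assoc, yGen, zGen]

lemma cycProd_natCast_last :
    cycProd (p + 2) ((p + 1 : ℕ) : Fin (p + 2)) = zGen p * seg p 0 p * yGen p := by
  have hperiod := seg_add_period p 0 (p + 1)
  rw [zero_add] at hperiod
  rw [cycProd_natCast, ← seg_mul_seg p (b := p + 2) (by omega) (by omega), seg_add_one, hperiod,
    ← seg_mul_seg p (b := p) (by omega) (by omega), seg_add_one]
  simp only [mul_assoc, yGen, zGen]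

end Segments

section Relators

variable (p : ℕ) (κ : Fin (p + 2) → ℕ)

lemma braidRels_subset_JRels : braidRels p κ ⊆ JRels (p + 2) κ := by
  rintro r (⟨i, rfl⟩ | rfl | ⟨i, rfl⟩)
  · exact Or.inl ⟨i, rfl⟩
  · refine Or.inr ⟨((0 : ℕ) : Fin (p + 2)), ((p + 1 : ℕ) : Fin (p + 2)), ?_⟩
    rw [cycProd_natCast_of_le p (Nat.zero_le p), cycProd_natCast_last, seg_self, mul_one]
  · refine Or.inr ⟨((i : ℕ) : Fin (p + 2)), ((i + 1 : ℕ) : Fin (p + 2)), ?_⟩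
    rw [cycProd_natCast_of_le p i.isLt.le, cycProd_natCast_of_le p i.isLt]

lemma mk_braidRels_cycProd (i : Fin (p + 2)) :
    PresentedGroup.mk (braidRels p κ) (cycProd (p + 2) i) =
      PresentedGroup.mk (braidRels p κ) (cycProd (p + 2) 0) := by
  set c : ℕ → PresentedGroup (braidRels p κ) :=
    fun m => PresentedGroup.mk _ (cycProd (p + 2) (m : Fin (p + 2)))
  have hstep : ∀ m (hm : m < p), c m = c (m + 1) := fun m hm =>
    PresentedGroup.mk_eq_mk_of_mul_inv_mem <| Or.inr <| Or.inr ⟨⟨m, hm⟩, by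
      rw [cycProd_natCast_of_le p hm.le, cycProd_natCast_of_le p hm]⟩
  have hchain : ∀ m ≤ p, c m = c 0 := by
    intro m hm
    induction m with
    | zero => rfl
    | succ m ih => rw [← hstep m (by omega), ih (by omega)]
  have hlast : c 0 = c (p + 1) :=
    PresentedGroup.mk_eq_mk_of_mul_inv_mem <| Or.inr <| Or.inl <| by
      rw [cycProd_natCast_of_le p (Nat.zero_le p), cycProd_natCast_last, seg_self, mul_one]
  rw [← Fin.cast_val_eq_self i]
  rcases Nat.lt_succ_iff_lt_or_eq.mp i.isLt with hi | hi
  · exact hchain i (by omega)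
  · rw [hi]
    exact hlast.symm

lemma JRels_subset_normalClosure_braidRels :
    JRels (p + 2) κ ⊆ Subgroup.normalClosure (braidRels p κ) := by
  rintro r (⟨i, rfl⟩ | ⟨i, j, rfl⟩)
  · exact Subgroup.subset_normalClosure (Or.inl ⟨i, rfl⟩)
  · rw [SetLike.mem_coe, ← PresentedGroup.mk_eq_one_iff, map_mul, map_inv, mul_inv_eq_one,
      mk_braidRels_cycProd, mk_braidRels_cycProd p κ j]

lemma normalClosure_braidRels :
    Subgroup.normalClosure (braidRels p κ) = Subgroup.normalClosure (JRels (p + 2) κ) :=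
  le_antisymm (Subgroup.normalClosure_mono (braidRels_subset_JRels p κ))
    (Subgroup.normalClosure_le_normal (JRels_subset_normalClosure_braidRels p κ))

end Relators

theorem stmt15_general (p : ℕ) (k : Fin p → ℕ) (b c : ℕ) :
    ∃ φ : PresentedGroup (braidRels p (extFun p k b c)) ≃*
        JGroup (p + 2) (extFun p k b c),
      ∀ i : Fin (p + 2), φ (PresentedGroup.of i) = PresentedGroup.of i :=
  ⟨QuotientGroup.quotientMulEquivOfEq (normalClosure_braidRels p (extFun p k b c)), fun _ => rfl⟩

/-- The group presented by
`⟨x_1,…,x_p, y, z ∣ x_i^{k_i} = 1, y^b = 1, z^c = 1, x_1⋯x_p y z = z x_1⋯x_p y,`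
`x_i⋯x_p y z x_1⋯x_{i−1} = x_{i+1}⋯x_p y z x_1⋯x_i (1 ≤ i ≤ p)⟩` is isomorphic to the
generalized parent J-group `J(k_1,…,k_p,b,c)` via `x_i ↦ s_i`, `y ↦ s_{p+1}`, `z ↦ s_{p+2}`. -/
theorem stmt15 (p : ℕ) (k : Fin p → ℕ) (b c : ℕ)
    (hk : ∀ i, k i ≠ 1) (hb : b ≠ 1) (hc : c ≠ 1) :
    ∃ φ : PresentedGroup (braidRels p (extFun p k b c)) ≃*
        JGroup (p + 2) (extFun p k b c),
      ∀ i : Fin (p + 2), φ (PresentedGroup.of i) = PresentedGroup.of i :=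
  stmt15_general p k b c
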